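/- arXiv:0810.0399 — 5 statements merged into one kernel-verified Lean document; each statement's English description precedes it below -/
import Mathlib

section
/- Let 1 → N → Γ → Q → 1 be a short exact sequence of finitely generated groups where Q has no non-trivial finite quotients and is super-perfect (H₁(Q,ℤ) = H₂(Q,ℤ) = 0). Then for every finite-index subgroup I of N that is normal in Γ, there exists a finite-index subgroup H of Γ with H ∩ N = I. -/
/-- Let `1 → N → Γ → Q → 1` be a short exact sequence of finitely generated
groups where `Q = Γ/N` has no non-trivial finite quotients and is super-perfect
(`H₁(Q,ℤ) = H₂(Q,ℤ) = 0`; by the universal-coefficient/central-extension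
splitting criterion this is expressed by saying that every central extension of
`Q` by an abelian group splits).  Then for every finite-index subgroup `I` of
`N` that is normal in `Γ`, there exists a finite-index subgroup `H` of `Γ`
with `H ∩ N = I`. -/
theorem statement3 {Γ : Type} [Group Γ] (hΓfg : Group.FG Γ)
    (N : Subgroup Γ) [N.Normal] (hNfg : Group.FG N)
    (hQ : ∀ (L : Subgroup (Γ ⧸ N)), L.Normal → L.FiniteIndex → L = ⊤)
    (hsuper : ∀ (M : Type) [Group M] (φ : M →* (Γ ⧸ N)), Function.Surjective φ →
      φ.ker ≤ Subgroup.center M → ∃ s : (Γ ⧸ N) →* M, φ.comp s = MonoidHom.id (Γ ⧸ N))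
    (I : Subgroup Γ) (hIN : I ≤ N) [I.Normal]
    (hIfin : (I.subgroupOf N).FiniteIndex) :
    ∃ H : Subgroup Γ, H.FiniteIndex ∧ H ⊓ N = I := by
  classical
  set π : Γ →* Γ ⧸ I := QuotientGroup.mk' I with hπdef
  have hπ : Function.Surjective π := QuotientGroup.mk'_surjective I
  set φ : (Γ ⧸ I) →* (Γ ⧸ N) :=
    QuotientGroup.map I N (MonoidHom.id Γ) (by simpa using hIN) with hφdef
  have hφπ : ∀ x : Γ, φ (π x) = QuotientGroup.mk' N x := fun x => rfl
  have hφsurj : Function.Surjective φ := by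
    intro q
    obtain ⟨x, rfl⟩ := QuotientGroup.mk'_surjective N q
    exact ⟨π x, hφπ x⟩
  set Nbar : Subgroup (Γ ⧸ I) := N.map π with hNbardef
  have hNbarNormal : Nbar.Normal := Subgroup.Normal.map ‹N.Normal› π hπ
  have hkerφ : φ.ker = Nbar := by
    ext z
    obtain ⟨y, rfl⟩ := hπ z
    constructor
    · intro hy
      have hyN : y ∈ N := by
        have h1 : (QuotientGroup.mk' N) y = 1 := by rw [← hφπ y]; exact hy
        exact (QuotientGroup.eq_one_iff y).mp h1
      exact ⟨y, hyN, rfl⟩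
    · rintro ⟨n, hn, hny⟩
      obtain ⟨z, hz, hzz⟩ := (QuotientGroup.mk'_eq_mk' (N := I)).mp hny
      have hyN : y ∈ N := hzz ▸ N.mul_mem hn (hIN hz)
      have : (QuotientGroup.mk' N) y = 1 := (QuotientGroup.eq_one_iff y).mpr hyN
      show φ (π y) = 1
      rw [hφπ y, this]
  -- N̄ is finite
  have hNbarFinite : Finite Nbar := by
    set ψ : N →* Γ ⧸ I := π.comp N.subtype with hψdef
    have hkerψ : ψ.ker = I.subgroupOf N := by
      ext n
      simp only [MonoidHom.mem_ker, Subgroup.mem_subgroupOf]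
      show (QuotientGroup.mk' I) (n : Γ) = 1 ↔ _
      exact QuotientGroup.eq_one_iff _
    have hrangeψ : ψ.range = Nbar := by
      rw [hψdef, MonoidHom.range_comp, Subgroup.range_subtype]
    have hfinq : Finite (N ⧸ ψ.ker) := by
      rw [hkerψ]
      have h0 : (I.subgroupOf N).index ≠ 0 := hIfin.index_ne_zero
      exact Nat.finite_of_card_ne_zero (by rwa [← Subgroup.index_eq_card])
    have := Finite.of_equiv _ (QuotientGroup.quotientKerEquivRange ψ).toEquiv
    rwa [hrangeψ] at this
  -- the centralizer of N̄
  set C : Subgroup (Γ ⧸ I) := Subgroup.centralizer (Nbar : Set (Γ ⧸ I)) with hCdef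
  have hCnormal : C.Normal := by
    constructor
    intro c hc g
    rw [hCdef, Subgroup.mem_centralizer_iff] at hc ⊢
    intro h hh
    have hh' : g⁻¹ * h * g ∈ Nbar := by
      have := hNbarNormal.conj_mem h hh g⁻¹
      rwa [inv_inv] at this
    have key := hc _ hh'
    have := congrArg (fun x => g * x * g⁻¹) key
    simpa [mul_assoc] using this
  -- C has finite index
  have hCker : C = (MulAut.conjNormal (H := Nbar)).ker := by
    ext g
    simp only [MonoidHom.mem_ker, hCdef, Subgroup.mem_centralizer_iff]
    rw [MulEquiv.ext_iff]
    constructor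
    · intro hg h
      apply Subtype.ext
      have := hg (h : Γ ⧸ I) h.2
      show g * (h : Γ ⧸ I) * g⁻¹ = h
      rw [← this, mul_assoc, mul_inv_cancel, mul_one]
    · intro hg h hh
      have := hg ⟨h, hh⟩
      have h2 : g * h * g⁻¹ = h := congrArg Subtype.val this
      calc h * g = (g * h * g⁻¹) * g := by rw [h2]
        _ = g * h := by group
  have hCfin : C.FiniteIndex := by
    haveI : Finite (MulAut Nbar) :=
      Finite.of_injective (fun e : MulAut Nbar => (e : Nbar → Nbar)) DFunLike.coe_injective
    rw [hCker]
    infer_instance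
  -- the image of C in Q is all of Q
  have hCq : C.map φ = ⊤ := by
    apply hQ
    · exact hCnormal.map φ hφsurj
    · constructor
      intro h0
      have hdvd := Subgroup.index_map_dvd (H := C) hφsurj
      rw [h0] at hdvd
      exact hCfin.index_ne_zero (Nat.eq_zero_of_zero_dvd hdvd)
  set ψC : C →* (Γ ⧸ N) := φ.comp C.subtype with hψCdef
  have hψCsurj : Function.Surjective ψC := by
    rw [← MonoidHom.range_eq_top, hψCdef, MonoidHom.range_comp, Subgroup.range_subtype, hCq]
  have hψCcentral : ψC.ker ≤ Subgroup.center C := by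
    intro x hx
    rw [Subgroup.mem_center_iff]
    intro c
    apply Subtype.ext
    have hxN : (x : Γ ⧸ I) ∈ Nbar := by
      rw [← hkerφ]
      exact hx
    exact (Subgroup.mem_centralizer_iff.mp c.2 (x : Γ ⧸ I) hxN).symm
  obtain ⟨s, hs⟩ := hsuper C ψC hψCsurj hψCcentral
  have hsid : ∀ q : Γ ⧸ N, ψC (s q) = q := fun q => congrArg (fun f => f q) hs
  set H' : Subgroup (Γ ⧸ I) := s.range.map C.subtype with hH'def
  have hH'leC : H' ≤ C := by
    rw [hH'def]
    exact Subgroup.map_subtype_le _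
  -- kernel of ψC is finite
  have hkerfin : Finite ψC.ker := by
    apply Finite.of_injective (fun k : ψC.ker => (⟨((k : C) : Γ ⧸ I), by
      rw [← hkerφ]; exact k.2⟩ : Nbar))
    intro a b hab
    have h := congrArg (fun z : Nbar => (z : Γ ⧸ I)) hab
    exact Subtype.ext (Subtype.ext h)
  -- s.range has finite index in C
  have hQuotFin : Finite (C ⧸ s.range) := by
    apply Finite.of_surjective (fun k : ψC.ker => (QuotientGroup.mk (k : C) : C ⧸ s.range))
    intro q
    obtain ⟨c, rfl⟩ := QuotientGroup.mk_surjective q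
    refine ⟨⟨c * (s (ψC c))⁻¹, ?_⟩, ?_⟩
    · rw [MonoidHom.mem_ker, map_mul, map_inv, hsid, mul_inv_cancel]
    · show QuotientGroup.mk (c * (s (ψC c))⁻¹) = QuotientGroup.mk c
      apply Quotient.sound'
      rw [QuotientGroup.leftRel_apply]
      have hcalc : (c * (s (ψC c))⁻¹)⁻¹ * c = s (ψC c) := by group
      rw [hcalc]
      exact ⟨ψC c, rfl⟩
  have hH'fin : H'.index ≠ 0 := by
    have h1 : H'.relIndex C * C.index = H'.index := Subgroup.relIndex_mul_index hH'leC
    have h2 : H'.relIndex C = s.range.index := by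
      unfold Subgroup.relIndex
      congr 1
      rw [hH'def, Subgroup.subgroupOf, Subgroup.comap_map_eq_self_of_injective
        C.subtype_injective]
    rw [← h1, h2]
    exact Nat.mul_ne_zero Subgroup.index_ne_zero_of_finite hCfin.index_ne_zero
  refine ⟨H'.comap π, ⟨?_⟩, ?_⟩
  · rwa [Subgroup.index_comap_of_surjective _ hπ]
  · ext x
    simp only [Subgroup.mem_inf, Subgroup.mem_comap]
    constructor
    · rintro ⟨hxH, hxN⟩
      obtain ⟨c, ⟨qq, hq⟩, hcx⟩ := hxH
      have hφ1 : φ (π x) = 1 := by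
        rw [hφπ x]
        exact (QuotientGroup.eq_one_iff x).mpr hxN
      have hq1 : qq = 1 := by
        have : ψC c = qq := by rw [← hq, hsid]
        rw [← this]
        show φ (C.subtype c) = 1
        rw [hcx]
        exact hφ1
      have hc1 : c = 1 := by rw [← hq, hq1, map_one]
      have : π x = 1 := by rw [← hcx, hc1]; rfl
      exact (QuotientGroup.eq_one_iff x).mp this
    · intro hxI
      refine ⟨⟨1, one_mem _, ?_⟩, hIN hxI⟩
      show (1 : Γ ⧸ I) = π x
      exact ((QuotientGroup.eq_one_iff x).mpr hxI).symm
end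

section
/- Let 1 → N → Γ → Q → 1 be a short exact sequence of finitely generated groups where Q has no non-trivial finite quotients and H₂(Q,ℤ) = 0. Then the inclusion N ↪ Γ induces an isomorphism of profinite completions N̂ → Γ̂. -/
section ProfiniteCompletionDef

/-- The index category for the profinite completion of `G`: finite-index
normal subgroups of `G`. -/
def FinIndexNormalSubgroup (G : Type) [Group G] : Type :=
  {K : Subgroup G // K.Normal ∧ K.FiniteIndex}

/-- The finite quotient of `G` by a finite-index normal subgroup. -/
def FinQuot {G : Type} [Group G] (K : FinIndexNormalSubgroup G) : Type :=
  G ⧸ K.1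

instance {G : Type} [Group G] (K : FinIndexNormalSubgroup G) : Group (FinQuot K) :=
  @QuotientGroup.Quotient.group G _ K.1 K.2.1

/-- The transition map `G/K → G/L` for `K ≤ L`. -/
def finQuotTransition {G : Type} [Group G] (K L : FinIndexNormalSubgroup G)
    (h : K.1 ≤ L.1) : FinQuot K →* FinQuot L :=
  letI := K.2.1; letI := L.2.1
  QuotientGroup.map K.1 L.1 (MonoidHom.id G) (fun _ hx => h hx)

/-- The profinite completion of `G`, realised as the inverse limit of the
finite quotients `G/K` over the finite-index normal subgroups `K` of `G`:
the subgroup of the product `∀ K, G/K` consisting of the compatible families. -/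
def profiniteCompletion (G : Type) [Group G] :
    Subgroup (∀ K : FinIndexNormalSubgroup G, FinQuot K) where
  carrier := {x | ∀ (K L : FinIndexNormalSubgroup G) (h : K.1 ≤ L.1),
    finQuotTransition K L h (x K) = x L}
  one_mem' := by intro K L h; simp [map_one]
  mul_mem' := by intro a b ha hb K L h; simp [map_mul, ha K L h, hb K L h]
  inv_mem' := by intro a ha K L h; simp [map_inv, ha K L h]

/-- The comap of a finite-index normal subgroup along a homomorphism is a
finite-index normal subgroup. -/
def comapFinIndexNormal {H G : Type} [Group H] [Group G] (φ : H →* G)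
    (K : FinIndexNormalSubgroup G) : FinIndexNormalSubgroup H :=
  ⟨K.1.comap φ, K.2.1.comap φ, by
    constructor
    rw [Subgroup.index_comap]
    intro h0
    exact K.2.2.index_ne_zero
      (Nat.eq_zero_of_zero_dvd (h0 ▸ (@Subgroup.relIndex_dvd_index_of_normal _ _ K.1 φ.range K.2.1)))⟩

/-- The map on profinite completions induced by a homomorphism `φ : H → G`. -/
def profiniteCompletionMap {H G : Type} [Group H] [Group G] (φ : H →* G) :
    profiniteCompletion H →* profiniteCompletion G where
  toFun x := ⟨fun K =>
      letI := (comapFinIndexNormal φ K).2.1; letI := K.2.1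
      QuotientGroup.map _ K.1 φ (fun _ hx => hx) (x.1 (comapFinIndexNormal φ K)),
    by
      intro K L h
      have hx := x.2 (comapFinIndexNormal φ K) (comapFinIndexNormal φ L)
        (fun _ hy => h hy)
      letI := K.2.1; letI := L.2.1
      letI := (comapFinIndexNormal φ K).2.1; letI := (comapFinIndexNormal φ L).2.1
      obtain ⟨g, hg⟩ := QuotientGroup.mk_surjective (x.1 (comapFinIndexNormal φ K))
      have hL : x.1 (comapFinIndexNormal φ L) = QuotientGroup.mk g := by
        rw [← hx, ← hg]; rfl
      show finQuotTransition K L h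
          (QuotientGroup.map _ K.1 φ (fun _ hx => hx) (x.1 (comapFinIndexNormal φ K))) =
        QuotientGroup.map _ L.1 φ (fun _ hx => hx) (x.1 (comapFinIndexNormal φ L))
      rw [← hg, hL]
      rfl⟩
  map_one' := by
    ext K
    letI := (comapFinIndexNormal φ K).2.1; letI := K.2.1
    simp
    exact map_one _
  map_mul' := fun a b => by
    ext K
    letI := (comapFinIndexNormal φ K).2.1; letI := K.2.1
    obtain ⟨g, hg⟩ := QuotientGroup.mk_surjective (a.1 (comapFinIndexNormal φ K))
    obtain ⟨g', hg'⟩ := QuotientGroup.mk_surjective (b.1 (comapFinIndexNormal φ K))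
    simp only [Subgroup.coe_mul, Pi.mul_apply, ← hg, ← hg', map_mul]
    exact (map_mul (QuotientGroup.map (Subgroup.comap φ K.1) K.1 φ (fun _ hx => hx)) (g : H ⧸ (comapFinIndexNormal φ K).1) g').trans (by rw [hg, hg']; rfl)

end ProfiniteCompletionDef


/-!
Surjectivity of `N̂ → Γ̂` needs `N` to map onto every finite quotient `Γ/K`; injectivity needs
every finite-index normal subgroup of `N` to contain `N ∩ K` for some finite-index normal
`K ◁ Γ`. The first holds because the image of `Γ/K` in `Q` is a finite quotient of `Q`, hence
trivial, so `NK = Γ`.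

For the second, since `N` is finitely generated a finite-index `M ≤ N` contains a characteristic
subgroup of finite index, which is normal in `Γ`; so we may assume `M ◁ Γ` and pass to `Γ/M`,
where `F = N/M` is a finite normal subgroup with quotient `Q`. The centraliser `C` of `F` has
finite index, so it maps onto `Q`, with kernel `C ∩ F` central in `C`. This central extension of
`Q` splits; the image `S` of a section meets `F` trivially and has finite index because
`F S = Γ/M`, and the preimage in `Γ` of the normal core of `S` is the required `K`.
-/

open Function Subgroup

section InducedMap

variable {H G : Type} [Group H] [Group G]

lemma finQuotTransition_mk {K L : FinIndexNormalSubgroup G} (h : K.1 ≤ L.1) (g : G) :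
    finQuotTransition K L h (g : G ⧸ K.1) = (g : G ⧸ L.1) := rfl

lemma profiniteCompletion_apply_of_le (x : profiniteCompletion G) {K L : FinIndexNormalSubgroup G}
    (h : K.1 ≤ L.1) {g : G} (hg : x.1 K = (g : G ⧸ K.1)) : x.1 L = (g : G ⧸ L.1) := by
  rw [← x.2 K L h, hg, finQuotTransition_mk]

lemma profiniteCompletionMap_apply_of_eq_mk (φ : H →* G) (x : profiniteCompletion H)
    (K : FinIndexNormalSubgroup G) {h : H}
    (hx : x.1 (comapFinIndexNormal φ K) = (h : H ⧸ K.1.comap φ)) :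
    (profiniteCompletionMap φ x).1 K = (φ h : G ⧸ K.1) := by
  have := (comapFinIndexNormal φ K).2.1
  have := K.2.1
  show QuotientGroup.map _ K.1 φ (fun _ hx => hx) (x.1 (comapFinIndexNormal φ K)) = _
  rw [hx]
  rfl

theorem profiniteCompletionMap_injective (φ : H →* G)
    (hind : ∀ M : FinIndexNormalSubgroup H, ∃ K : FinIndexNormalSubgroup G, K.1.comap φ ≤ M.1) :
    Injective (profiniteCompletionMap φ) := by
  intro x y hxy
  refine Subtype.ext (funext fun M => ?_)
  obtain ⟨K, hKM⟩ := hind M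
  obtain ⟨a, ha⟩ := QuotientGroup.mk_surjective (x.1 (comapFinIndexNormal φ K))
  obtain ⟨b, hb⟩ := QuotientGroup.mk_surjective (y.1 (comapFinIndexNormal φ K))
  have hab : a⁻¹ * b ∈ K.1.comap φ := by
    have hK := congrArg (fun z => z.1 K) hxy
    simp only [profiniteCompletionMap_apply_of_eq_mk φ x K ha.symm,
      profiniteCompletionMap_apply_of_eq_mk φ y K hb.symm] at hK
    simpa using QuotientGroup.eq.mp hK
  rw [profiniteCompletion_apply_of_le x hKM ha.symm, profiniteCompletion_apply_of_le y hKM hb.symm]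
  exact QuotientGroup.eq.mpr (hKM hab)

theorem profiniteCompletionMap_surjective (φ : H →* G)
    (hdense : ∀ K : FinIndexNormalSubgroup G, φ.range ⊔ K.1 = ⊤)
    (hind : ∀ M : FinIndexNormalSubgroup H, ∃ K : FinIndexNormalSubgroup G, K.1.comap φ ≤ M.1) :
    Surjective (profiniteCompletionMap φ) := by
  intro y
  have hlift : ∀ K : FinIndexNormalSubgroup G, ∃ h : H, y.1 K = (φ h : G ⧸ K.1) := by
    intro K
    have := K.2.1
    obtain ⟨g, hg⟩ := QuotientGroup.mk_surjective (y.1 K)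
    obtain ⟨_, ⟨h, rfl⟩, k, hk, rfl⟩ :=
      mem_sup_of_normal_right.mp (hdense K ▸ mem_top g : g ∈ φ.range ⊔ K.1)
    exact ⟨h, hg.symm.trans (QuotientGroup.eq.mpr (by simpa using hk))⟩
  choose r hr using hlift
  have r_le : ∀ K L : FinIndexNormalSubgroup G, K.1 ≤ L.1 → (r K)⁻¹ * r L ∈ L.1.comap φ := by
    intro K L h
    rw [mem_comap, map_mul, map_inv, ← QuotientGroup.eq]
    exact (profiniteCompletion_apply_of_le y h (hr K)).symm.trans (hr L)
  -- both lifts agree with the lift for `K₁ ⊓ K₂`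
  have r_compat : ∀ K₁ K₂ : FinIndexNormalSubgroup G,
      (r K₁)⁻¹ * r K₂ ∈ K₁.1.comap φ ⊔ K₂.1.comap φ := by
    intro K₁ K₂
    have := K₁.2.1; have := K₂.2.1; have := K₁.2.2; have := K₂.2.2
    let K : FinIndexNormalSubgroup G := ⟨K₁.1 ⊓ K₂.1, inferInstance, inferInstance⟩
    have h₁ := r_le K K₁ inf_le_left
    have h₂ := r_le K K₂ inf_le_right
    simpa [mul_assoc] using mul_mem (mem_sup_left (inv_mem h₁)) (mem_sup_right h₂)
  choose K hK using hind
  refine ⟨⟨fun M => (r (K M) : H ⧸ M.1), fun M M' hMM' => ?_⟩, Subtype.ext (funext fun L => ?_)⟩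
  · rw [finQuotTransition_mk]
    exact QuotientGroup.eq.mpr <| sup_le ((hK M).trans hMM') (hK M') (r_compat _ _)
  · rw [profiniteCompletionMap_apply_of_eq_mk φ _ L rfl, hr L]
    refine QuotientGroup.eq.mpr ?_
    have hKL : (K (comapFinIndexNormal φ L)).1.comap φ ≤ L.1.comap φ := hK _
    have h : (r (K (comapFinIndexNormal φ L)))⁻¹ * r L ∈ L.1.comap φ :=
      sup_le hKL le_rfl (r_compat _ L)
    simpa using h

end InducedMap

theorem Group.FG.finite_monoidHom {A B : Type*} [Group A] [Group B] [Finite B] (hA : Group.FG A) :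
    Finite (A →* B) := by
  obtain ⟨S, hS, hSfin⟩ := Group.fg_iff.mp hA
  have := hSfin.to_subtype
  refine Finite.of_injective (fun f : A →* B => fun s : S => f s) fun f g hfg => ?_
  exact MonoidHom.eq_of_eqOn_dense hS fun s hs => congrFun hfg ⟨s, hs⟩

theorem Group.FG.exists_characteristic_finiteIndex_le {G : Type*} [Group G] (hG : Group.FG G)
    (M : Subgroup G) [M.FiniteIndex] :
    ∃ M₀ : Subgroup G, M₀.Characteristic ∧ M₀.FiniteIndex ∧ M₀ ≤ M := by
  have := hG.finite_monoidHom (B := G ⧸ M.normalCore)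
  refine ⟨⨅ f : G →* G ⧸ M.normalCore, f.ker, ?_, finiteIndex_iInf fun _ => inferInstance, ?_⟩
  · refine characteristic_iff_le_comap.mpr fun ϕ x hx => mem_iInf.mpr fun f => ?_
    exact mem_iInf.mp hx (f.comp ϕ.toMonoidHom)
  · calc ⨅ f : G →* G ⧸ M.normalCore, f.ker ≤ (QuotientGroup.mk' M.normalCore).ker := iInf_le _ _
      _ = M.normalCore := QuotientGroup.ker_mk' _
      _ ≤ M := normalCore_le M

section Extension

variable {G Q : Type} [Group G] [Group Q]

theorem Subgroup.finiteIndex_map_of_surjective (K : Subgroup G) [K.FiniteIndex] {ψ : G →* Q}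
    (hψ : Surjective ψ) : (K.map ψ).FiniteIndex :=
  ⟨fun h => FiniteIndex.index_ne_zero (H := K) (Nat.eq_zero_of_zero_dvd (h ▸ index_map_dvd K hψ))⟩

theorem map_eq_top_of_forall_finiteIndex_eq_top
    (hQ : ∀ L : Subgroup Q, L.Normal → L.FiniteIndex → L = ⊤) {ψ : G →* Q} (hψ : Surjective ψ)
    (K : Subgroup G) [K.Normal] [K.FiniteIndex] : K.map ψ = ⊤ :=
  hQ _ (.map ‹_› ψ hψ) (K.finiteIndex_map_of_surjective hψ)

theorem Subgroup.centralizer_eq_ker_conjNormal (F : Subgroup G) [F.Normal] :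
    centralizer (F : Set G) = (MulAut.conjNormal : G →* MulAut F).ker := by
  ext g
  simp only [mem_centralizer_iff, MonoidHom.mem_ker, MulEquiv.ext_iff, Subtype.ext_iff,
    MulAut.conjNormal_apply, MulAut.one_apply, SetLike.mem_coe, Subtype.forall]
  exact forall₂_congr fun h _ => by rw [mul_inv_eq_iff_eq_mul]; exact eq_comm

instance Subgroup.finiteIndex_centralizer (F : Subgroup G) [F.Normal] [Finite F] :
    (centralizer (F : Set G)).FiniteIndex := by
  rw [F.centralizer_eq_ker_conjNormal]
  infer_instance

theorem finiteIndex_range_of_comp_eq_id (ψ : G →* Q) [Finite ψ.ker] {σ : Q →* G}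
    (hσ : ψ.comp σ = MonoidHom.id Q) : σ.range.FiniteIndex := by
  have hψσ (q : Q) : ψ (σ q) = q := DFunLike.congr_fun hσ q
  suffices Surjective fun f : ψ.ker => (f : G ⧸ σ.range) by
    have := Finite.of_surjective _ this
    exact finiteIndex_of_finite_quotient
  intro z
  obtain ⟨g, rfl⟩ := QuotientGroup.mk_surjective z
  refine ⟨⟨g * (σ (ψ g))⁻¹, by simp [hψσ]⟩, QuotientGroup.eq.mpr ⟨ψ g, ?_⟩⟩
  group

theorem disjoint_range_ker_of_comp_eq_id (ψ : G →* Q) {σ : Q →* G}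
    (hσ : ψ.comp σ = MonoidHom.id Q) : Disjoint σ.range ψ.ker := by
  refine disjoint_def.mpr ?_
  rintro _ ⟨q, rfl⟩ hq
  rw [show q = 1 from (DFunLike.congr_fun hσ q).symm.trans hq, map_one]

theorem exists_finIndexNormalSubgroup_disjoint_ker (ψ : G →* Q) (hψ : Surjective ψ)
    [Finite ψ.ker] (hQ : ∀ L : Subgroup Q, L.Normal → L.FiniteIndex → L = ⊤)
    (hsuper : ∀ (M : Type) [Group M] (φ : M →* Q), Surjective φ →
      φ.ker ≤ center M → ∃ s : Q →* M, φ.comp s = MonoidHom.id Q) :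
    ∃ K : FinIndexNormalSubgroup G, Disjoint K.1 ψ.ker := by
  let C := centralizer (ψ.ker : Set G)
  let ψC := ψ.comp C.subtype
  have hψC : Surjective ψC := by
    rw [← MonoidHom.range_eq_top, MonoidHom.range_comp, range_subtype]
    exact map_eq_top_of_forall_finiteIndex_eq_top hQ hψ C
  have hψC_central : ψC.ker ≤ center C := fun x hx =>
    mem_center_iff.mpr fun c => Subtype.ext (mem_centralizer_iff.mp c.2 x hx).symm
  obtain ⟨s, hs⟩ := hsuper C ψC hψC hψC_central
  let σ := C.subtype.comp s
  have hσ : ψ.comp σ = MonoidHom.id Q := hs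
  have := finiteIndex_range_of_comp_eq_id ψ hσ
  exact ⟨⟨σ.range.normalCore, inferInstance, inferInstance⟩,
    (disjoint_range_ker_of_comp_eq_id ψ hσ).mono_left (normalCore_le _)⟩

end Extension

section ShortExactSequence

variable {Γ : Type} [Group Γ] (N : Subgroup Γ) [N.Normal]

theorem sup_eq_top_of_forall_finiteIndex_eq_top
    (hQ : ∀ L : Subgroup (Γ ⧸ N), L.Normal → L.FiniteIndex → L = ⊤)
    (K : Subgroup Γ) [K.Normal] [K.FiniteIndex] : N ⊔ K = ⊤ := by
  rw [sup_comm, ← QuotientGroup.ker_mk' N, ← comap_map_eq,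
    map_eq_top_of_forall_finiteIndex_eq_top hQ (QuotientGroup.mk'_surjective N) K, comap_top]

theorem exists_finIndexNormalSubgroup_comap_subtype_le (hNfg : Group.FG N)
    (hQ : ∀ L : Subgroup (Γ ⧸ N), L.Normal → L.FiniteIndex → L = ⊤)
    (hsuper : ∀ (M : Type) [Group M] (φ : M →* (Γ ⧸ N)), Surjective φ →
      φ.ker ≤ center M → ∃ s : (Γ ⧸ N) →* M, φ.comp s = MonoidHom.id (Γ ⧸ N))
    (M : Subgroup N) [M.FiniteIndex] :
    ∃ K : FinIndexNormalSubgroup Γ, K.1.comap N.subtype ≤ M := by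
  obtain ⟨M₀, _, _, hM₀M⟩ := hNfg.exists_characteristic_finiteIndex_le M
  -- normal in `Γ` because `M₀` is characteristic in `N`
  set M₀' := M₀.map N.subtype
  let ψ : Γ ⧸ M₀' →* Γ ⧸ N := QuotientGroup.lift M₀' (QuotientGroup.mk' N)
    (by rw [QuotientGroup.ker_mk']; exact map_subtype_le M₀)
  have hψ : Surjective ψ :=
    QuotientGroup.lift_surjective_of_surjective _ _ (QuotientGroup.mk'_surjective N) _
  have hker : ψ.ker = N.map (QuotientGroup.mk' M₀') := by
    rw [QuotientGroup.ker_lift, QuotientGroup.ker_mk']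
  have : Finite ψ.ker := by
    rw [hker]
    refine Nat.finite_of_card_ne_zero ?_
    rw [← relIndex_ker, QuotientGroup.ker_mk', relIndex, subgroupOf,
      comap_map_eq_self_of_injective N.subtype_injective]
    exact FiniteIndex.index_ne_zero
  obtain ⟨K, hK⟩ := exists_finIndexNormalSubgroup_disjoint_ker ψ hψ hQ hsuper
  refine ⟨comapFinIndexNormal (QuotientGroup.mk' M₀') K, fun n hn => hM₀M ?_⟩
  have hn' : (n : Γ) ∈ M₀' := by
    rw [← QuotientGroup.ker_mk' M₀', MonoidHom.mem_ker]
    exact disjoint_def.mp hK hn (hker ▸ mem_map_of_mem _ n.2)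
  exact (mem_map_iff_mem N.subtype_injective).mp hn'

end ShortExactSequence

theorem statement4_general {Γ : Type} [Group Γ]
    (N : Subgroup Γ) [N.Normal] (hNfg : Group.FG N)
    (hQ : ∀ (L : Subgroup (Γ ⧸ N)), L.Normal → L.FiniteIndex → L = ⊤)
    (hsuper : ∀ (M : Type) [Group M] (φ : M →* (Γ ⧸ N)), Function.Surjective φ →
      φ.ker ≤ Subgroup.center M → ∃ s : (Γ ⧸ N) →* M, φ.comp s = MonoidHom.id (Γ ⧸ N)) :
    Function.Bijective (profiniteCompletionMap N.subtype) := by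
  have hind (M : FinIndexNormalSubgroup N) :
      ∃ K : FinIndexNormalSubgroup Γ, K.1.comap N.subtype ≤ M.1 :=
    have := M.2.2
    exists_finIndexNormalSubgroup_comap_subtype_le N hNfg hQ hsuper M.1
  have hdense (K : FinIndexNormalSubgroup Γ) : N.subtype.range ⊔ K.1 = ⊤ := by
    have := K.2.1
    have := K.2.2
    rw [range_subtype]
    exact sup_eq_top_of_forall_finiteIndex_eq_top N hQ K.1
  exact ⟨profiniteCompletionMap_injective _ hind, profiniteCompletionMap_surjective _ hdense hind⟩

/-- Let `1 → N → Γ → Q → 1` be a short exact sequence of finitely generated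
groups where `Q = Γ/N` has no non-trivial finite quotients and is super-perfect
(`H₁(Q,ℤ) = H₂(Q,ℤ) = 0`; via the universal-coefficient theorem this is
expressed by the splitting of all central extensions of `Q`).  Then the
inclusion `N ↪ Γ` induces an isomorphism of profinite completions
`N̂ → Γ̂` (a continuous bijective homomorphism of profinite groups, hence an
isomorphism of topological groups). -/
theorem statement4 {Γ : Type} [Group Γ] (hΓfg : Group.FG Γ)
    (N : Subgroup Γ) [N.Normal] (hNfg : Group.FG N)
    (hQ : ∀ (L : Subgroup (Γ ⧸ N)), L.Normal → L.FiniteIndex → L = ⊤)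
    (hsuper : ∀ (M : Type) [Group M] (φ : M →* (Γ ⧸ N)), Function.Surjective φ →
      φ.ker ≤ Subgroup.center M → ∃ s : (Γ ⧸ N) →* M, φ.comp s = MonoidHom.id (Γ ⧸ N)) :
    Function.Bijective (profiniteCompletionMap N.subtype) :=
  statement4_general N hNfg hQ hsuper
end

section
/- If H = A × C is a finitely presented group and C is finitely generated, then A is finitely presentable. -/
/-!
`A` is the quotient of `A × C` by the kernel of the first projection. That kernel is a copy of
`C`, so it is the normal closure of finitely many elements, and a quotient of a finitely
presented group by such a subgroup is again finitely presented.
-/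

/-- A group is finitely presentable if it is isomorphic to `F/⟪R⟫` for a free
group `F` of finite rank and `R` the normal closure of a finite set of
relators. -/
def FinitelyPresentable (G : Type*) [Group G] : Prop :=
  ∃ (n : ℕ) (rels : Finset (FreeGroup (Fin n))),
    Nonempty (G ≃* PresentedGroup (rels : Set (FreeGroup (Fin n))))

theorem finitelyPresentable_iff_isFinitelyPresented {G : Type*} [Group G] :
    FinitelyPresentable G ↔ Group.IsFinitelyPresented G := by
  constructor
  · rintro ⟨n, rels, ⟨e⟩⟩
    exact .equiv e.symm
  · intro _
    obtain ⟨n, s, hs, ⟨e⟩⟩ := Group.IsFinitelyPresented.exists_mulEquiv_presentedGroup (G := G)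
    exact ⟨n, hs.toFinset, ⟨hs.coe_toFinset.symm ▸ e⟩⟩

theorem MonoidHom.ker_fst_eq_range_inr (A C : Type*) [Group A] [Group C] :
    (MonoidHom.fst A C).ker = (MonoidHom.inr A C).range := by
  ext ⟨a, c⟩
  simp [Subgroup.mem_prod, eq_comm]

theorem MonoidHom.ker_fst_isFinitelyNormallyGenerated {A C : Type*} [Group A] [Group C]
    (hC : Group.FG C) : (MonoidHom.fst A C).ker.IsFinitelyNormallyGenerated := by
  have : Group.FG (MonoidHom.fst A C).ker := by
    rw [MonoidHom.ker_fst_eq_range_inr]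
    infer_instance
  exact .of_FG _

/-- If `H = A × C` is a finitely presented group and `C` is finitely
generated, then `A` is finitely presentable. -/
theorem statement10 {A C : Type*} [Group A] [Group C]
    (hH : FinitelyPresentable (A × C)) (hC : Group.FG C) :
    FinitelyPresentable A := by
  rw [finitelyPresentable_iff_isFinitelyPresented] at hH ⊢
  exact .of_surjective (MonoidHom.fst A C) Prod.fst_surjective
    (MonoidHom.ker_fst_isFinitelyNormallyGenerated hC)
end

section
/- A subgroup of finite index in a finitely presented group is finitely presented. -/
theorem FreeGroup.finite_of_fg {α : Type*} [Group.FG (FreeGroup α)] : Finite α := by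
  have : Group.FG (Abelianization (FreeGroup α)) :=
    Group.fg_of_surjective (QuotientGroup.mk'_surjective _)
  have : Module.Finite ℤ (FreeAbelianGroup α) :=
    Module.Finite.iff_addGroup_fg.mpr (AddGroup.fg_of_group_fg (G := Abelianization (FreeGroup α)))
  exact Module.Finite.finite_basis (FreeAbelianGroup.basis α)

instance IsFreeGroup.isFinitelyPresented {F : Type*} [Group F] [IsFreeGroup F] [Group.FG F] :
    Group.IsFinitelyPresented F := by
  have : Group.FG (FreeGroup (Generators F)) :=
    Group.fg_of_surjective (f := (toFreeGroup F : F →* _)) (toFreeGroup F).surjective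
  have : Finite (Generators F) := FreeGroup.finite_of_fg
  exact .equiv (toFreeGroup F).symm

theorem MonoidHom.ker_subgroupComap {G G' : Type*} [Group G] [Group G'] (f : G →* G')
    (H : Subgroup G') : (f.subgroupComap H).ker = f.ker.subgroupOf (H.comap f) := by
  ext x
  rw [mem_ker, Subgroup.mem_subgroupOf, mem_ker, ← OneMemClass.coe_eq_one]
  rfl

namespace Subgroup

theorem IsFinitelyNormallyGenerated.subgroupOf {G : Type*} [Group G] {N K : Subgroup G}
    (hN : N.IsFinitelyNormallyGenerated) (hNK : N ≤ K) [K.FiniteIndex] :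
    (N.subgroupOf K).IsFinitelyNormallyGenerated := by
  obtain ⟨S, hS, rfl⟩ := hN
  obtain ⟨T, hT, -⟩ := K.exists_isComplement_right 1
  set R : Set K := K.subtype ⁻¹' Set.image2 (fun t s => t * s * t⁻¹) T S
  have mem_R : ∀ t ∈ T, ∀ s ∈ S, ∀ h : t * s * t⁻¹ ∈ K, (⟨_, h⟩ : K) ∈ R :=
    fun t ht s hs _ => ⟨t, ht, s, hs, rfl⟩
  refine ⟨R, (hT.finite_right.image2 _ hS).preimage K.subtype_injective.injOn,
    le_antisymm (normalClosure_le_normal ?_) ?_⟩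
  · rintro x ⟨t, -, s, hs, hx⟩
    rw [SetLike.mem_coe, mem_subgroupOf, ← coe_subtype, ← hx]
    exact normalClosure_normal.conj_mem _ (subset_normalClosure hs) t
  · intro x hx
    rw [mem_subgroupOf] at hx
    rw [← mem_map_iff_mem K.subtype_injective]
    refine (closure_le _).2 ?_ hx
    intro c hc
    obtain ⟨s, hs, hconj⟩ := Group.mem_conjugatesOfSet_iff.mp hc
    obtain ⟨g, rfl⟩ := isConj_iff.mp hconj
    obtain ⟨⟨k, t⟩, rfl⟩ := (hT.existsUnique g).exists
    have hts : (t : G) * s * (t : G)⁻¹ ∈ K :=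
      hNK (normalClosure_normal.conj_mem _ (subset_normalClosure hs) t)
    refine ⟨k * ⟨_, hts⟩ * k⁻¹,
      normalClosure_normal.conj_mem _ (subset_normalClosure (mem_R t t.2 s hs hts)) k, ?_⟩
    simp only [map_mul, map_inv, coe_subtype]
    group

end Subgroup

theorem Group.IsFinitelyPresented.of_finiteIndex {G : Type*} [Group G]
    [hG : Group.IsFinitelyPresented G] (H : Subgroup G) [H.FiniteIndex] :
    Group.IsFinitelyPresented H := by
  obtain ⟨n, φ, hφ, hker⟩ := hG
  have : (H.comap φ).FiniteIndex :=
    ⟨by rw [H.index_comap_of_surjective hφ]; exact Subgroup.FiniteIndex.index_ne_zero⟩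
  have : Group.FG (H.comap φ) := Subgroup.fg_of_index_ne_zero _
  have : IsFreeGroup (H.comap φ) := subgroupIsFreeOfIsFree _
  refine .of_surjective (φ.subgroupComap H) (φ.subgroupComap_surjective_of_surjective H hφ) ?_
  rw [φ.ker_subgroupComap]
  exact hker.subgroupOf (φ.ker_le_comap H)

/-- A subgroup of finite index in a finitely presented group is finitely
presented. -/
theorem statement11 {G : Type*} [Group G] (hG : FinitelyPresentable G)
    (H : Subgroup G) [H.FiniteIndex] :
    FinitelyPresentable H :=
  have := finitelyPresentable_iff_isFinitelyPresented.mp hG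
  finitelyPresentable_iff_isFinitelyPresented.mpr (.of_finiteIndex H)
end

section
/- Let Γ be a finitely presented group and N ⊴ Γ a normal subgroup which is not finitely presentable. Then A = N × {0} is not a direct factor of any finite-index subgroup of G = Γ × ℤ. -/
/-- Working characterization. -/
def FP (G : Type*) [Group G] : Prop :=
  ∃ (n : ℕ) (f : FreeGroup (Fin n) →* G), Function.Surjective f ∧
    ∃ T : Finset (FreeGroup (Fin n)),
      f.ker = Subgroup.normalClosure (T : Set (FreeGroup (Fin n)))

theorem fp_iff (G : Type*) [Group G] : FinitelyPresentable G ↔ FP G := by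
  constructor
  · rintro ⟨n, rels, ⟨e⟩⟩
    refine ⟨n, e.symm.toMonoidHom.comp (PresentedGroup.mk _), ?_, rels, ?_⟩
    · exact e.symm.surjective.comp (PresentedGroup.mk_surjective _)
    · ext x
      simp only [MonoidHom.mem_ker, MonoidHom.comp_apply, MulEquiv.coe_toMonoidHom,
        EmbeddingLike.map_eq_one_iff]
      rw [show (1 : PresentedGroup (rels : Set (FreeGroup (Fin n)))) = PresentedGroup.mk _ 1 by
        simp, ]
      exact (QuotientGroup.eq_iff_div_mem (N := Subgroup.normalClosure _)).trans (by simp)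
  · rintro ⟨n, f, hsurj, T, hker⟩
    refine ⟨n, T, ⟨?_⟩⟩
    exact ((QuotientGroup.quotientKerEquivOfSurjective f hsurj).symm.trans
      (QuotientGroup.quotientMulEquivOfEq hker))

theorem finite_of_fg_freeGroup {X : Type*} (h : Group.FG (FreeGroup X)) : Finite X := by
  classical
  let φ : FreeGroup X →* Multiplicative (X →₀ ℤ) :=
    FreeGroup.lift (fun x => Multiplicative.ofAdd (Finsupp.single x 1))
  have hsurj : Function.Surjective φ := by
    intro f
    induction f using Finsupp.induction with
    | zero => exact ⟨1, map_one φ⟩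
    | single_add a b f _ _ ih =>
      obtain ⟨w, hw⟩ := ih
      refine ⟨(FreeGroup.of a) ^ b * w, ?_⟩
      have : φ (FreeGroup.of a) = Multiplicative.ofAdd (Finsupp.single a 1) :=
        FreeGroup.lift_apply_of
      rw [map_mul, map_zpow, this, hw]
      rw [← ofAdd_zsmul]
      simp [Finsupp.smul_single]
      rfl
  have h2 : Group.FG (Multiplicative (X →₀ ℤ)) := Group.fg_of_surjective hsurj
  have h3 : AddGroup.FG (X →₀ ℤ) := AddGroup.fg_iff_mul_fg.mpr h2
  have h4 : Module.Finite ℤ (X →₀ ℤ) := Module.Finite.iff_addGroup_fg.mpr h3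
  exact Module.Finite.finite_basis (Finsupp.basisSingleOne (R := ℤ) (ι := X))

theorem freeGroup_fin_equiv (G : Type*) [Group G] [IsFreeGroup G] (h : Group.FG G) :
    ∃ (k : ℕ), Nonempty (G ≃* FreeGroup (Fin k)) := by
  have e := IsFreeGroup.toFreeGroup G
  have hfg : Group.FG (FreeGroup (IsFreeGroup.Generators G)) :=
    @Group.fg_of_surjective _ _ _ _ h e.toMonoidHom e.surjective
  have : Finite (IsFreeGroup.Generators G) := finite_of_fg_freeGroup hfg
  obtain ⟨k, ⟨eq⟩⟩ := Finite.exists_equiv_fin (IsFreeGroup.Generators G)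
  exact ⟨k, ⟨e.trans (FreeGroup.freeGroupCongr eq)⟩⟩

open Subgroup

theorem subgroupOf_normalClosure_finiteIndex {F : Type*} [Group F] (H : Subgroup F)
    [H.FiniteIndex] (rels : Set F) (hle : Subgroup.normalClosure rels ≤ H) :
    ∃ S : Set H, (Subgroup.normalClosure rels).subgroupOf H = Subgroup.normalClosure S ∧
      (rels.Finite → S.Finite) := by
  classical
  have hQ : Finite (F ⧸ H) := H.finite_quotient_of_finiteIndex
  set t : F ⧸ H → F := fun q => (Quotient.out q)⁻¹ with ht
  -- decomposition: every g : F is h * t q for some h ∈ H and some q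
  have hdec : ∀ g : F, ∃ h ∈ H, ∃ q : F ⧸ H, g = h * t q := by
    intro g
    have h1 : ((Quotient.out ((g⁻¹ : F) : F ⧸ H))⁻¹ * g⁻¹ : F) ∈ H := by
      have h2 := QuotientGroup.out_eq' ((g⁻¹ : F) : F ⧸ H)
      rw [QuotientGroup.eq] at h2; exact h2
    refine ⟨g * Quotient.out ((g⁻¹ : F) : F ⧸ H), ?_, ((g⁻¹ : F) : F ⧸ H), by
      simp [ht]⟩
    have : (g * Quotient.out ((g⁻¹ : F) : F ⧸ H)) =
        ((Quotient.out ((g⁻¹ : F) : F ⧸ H))⁻¹ * g⁻¹)⁻¹ := by group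
    rw [this]
    exact inv_mem h1
  -- conjugates of rels by transversal elements, inside H
  have hmemH : ∀ (q : F ⧸ H) (r : F), r ∈ rels → t q * r * (t q)⁻¹ ∈ H := fun q r hr =>
    hle ((Subgroup.normalClosure_normal).conj_mem r (Subgroup.subset_normalClosure hr) (t q))
  set S : Set H := Set.range (fun p : (F ⧸ H) × rels =>
    (⟨t p.1 * (p.2 : F) * (t p.1)⁻¹, hmemH p.1 p.2 p.2.2⟩ : H)) with hS
  refine ⟨S, ?_, fun hfin => ?_⟩
  swap
  · have : Finite rels := hfin
    exact Set.finite_range _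
  -- the H-normal closure of S, pushed to F
  set K : Subgroup F := Subgroup.map H.subtype (Subgroup.normalClosure S) with hK
  have hKle : K ≤ H := by
    rw [hK]; rintro x ⟨y, _, rfl⟩; exact y.2
  -- W : generating set of K inside F
  have hKclosure : K = Subgroup.closure ((H.subtype : H → F) '' (Group.conjugatesOfSet S)) := by
    rw [hK, Subgroup.normalClosure, MonoidHom.map_closure]
  -- conjugation stability of the generating set
  have hWconj : ∀ (f : F), ∀ w ∈ ((H.subtype : H → F) '' (Group.conjugatesOfSet S)),
      f * w * f⁻¹ ∈ ((H.subtype : H → F) '' (Group.conjugatesOfSet S)) := by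
    rintro f w ⟨c, hc, rfl⟩
    rw [Group.mem_conjugatesOfSet_iff] at hc
    obtain ⟨s, hs, hconj⟩ := hc
    obtain ⟨h, hh⟩ := isConj_iff.mp hconj
    obtain ⟨⟨q, r⟩, rfl⟩ := hs
    -- now c = h * (t q * r * t q⁻¹) * h⁻¹ in H
    obtain ⟨h', hh', q', hq'⟩ := hdec (f * (h : F) * t q)
    have hr' : t q' * (r : F) * (t q')⁻¹ ∈ H := hmemH q' r r.2
    refine ⟨(⟨h', hh'⟩ : H) * ⟨t q' * (r : F) * (t q')⁻¹, hr'⟩ * (⟨h', hh'⟩ : H)⁻¹, ?_, ?_⟩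
    · rw [Group.mem_conjugatesOfSet_iff]
      refine ⟨⟨t q' * (r : F) * (t q')⁻¹, hr'⟩, ⟨(q', r), rfl⟩, ?_⟩
      rw [isConj_iff]
      exact ⟨⟨h', hh'⟩, rfl⟩
    · have hcval : ((c : F)) = (h : F) * (t q * (r : F) * (t q)⁻¹) * (h : F)⁻¹ := by
        rw [← hh]; rfl
      have key : f * (c : F) * f⁻¹ = (h' : F) * (t q' * (r : F) * (t q')⁻¹) * h'⁻¹ := by
        rw [hcval, show f * ((h : F) * (t q * (r : F) * (t q)⁻¹) * (h : F)⁻¹) * f⁻¹ =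
          (f * (h : F) * t q) * (r : F) * (f * (h : F) * t q)⁻¹ by group, hq']
        group
      simp only [map_mul, map_inv, Subgroup.coe_subtype]
      rw [key]
  have hKnormal : K.Normal := by
    constructor
    intro n hn g
    rw [hKclosure] at hn ⊢
    induction hn using Subgroup.closure_induction with
    | mem w hw => exact Subgroup.subset_closure (hWconj g w hw)
    | one => simpa using Subgroup.one_mem _
    | mul x y _ _ hx hy =>
      have : g * (x * y) * g⁻¹ = (g * x * g⁻¹) * (g * y * g⁻¹) := by group
      rw [this]; exact Subgroup.mul_mem _ hx hy
    | inv x _ hx =>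
      have : g * x⁻¹ * g⁻¹ = (g * x * g⁻¹)⁻¹ := by group
      rw [this]; exact Subgroup.inv_mem _ hx
  -- rels ⊆ K
  have hrelsK : Subgroup.normalClosure rels ≤ K := by
    apply Subgroup.normalClosure_le_normal
    intro r hr
    obtain ⟨h, hh, q, hq⟩ := hdec (1 : F)
    have hgen : t q * r * (t q)⁻¹ ∈ K := by
      refine ⟨⟨t q * r * (t q)⁻¹, hmemH q r hr⟩, ?_, rfl⟩
      exact Subgroup.subset_normalClosure ⟨(q, ⟨r, hr⟩), rfl⟩
    have := hKnormal.conj_mem _ hgen (t q)⁻¹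
    simpa [mul_assoc] using this
  · apply le_antisymm
    · intro x hx
      rw [Subgroup.mem_subgroupOf] at hx
      obtain ⟨y, hy, hyx⟩ := hrelsK hx
      rwa [show y = x from Subtype.ext hyx] at hy
    · apply Subgroup.normalClosure_le_normal
      rintro x ⟨⟨q, r⟩, rfl⟩
      rw [SetLike.mem_coe, Subgroup.mem_subgroupOf]
      exact (Subgroup.normalClosure_normal).conj_mem _ (Subgroup.subset_normalClosure r.2) _

instance freeGroup_fg (n : ℕ) : Group.FG (FreeGroup (Fin n)) := by
  rw [Group.fg_iff]
  exact ⟨Set.range FreeGroup.of, FreeGroup.closure_range_of _, Set.finite_range _⟩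

theorem fp_of_finiteIndex {G : Type*} [Group G] (hG : FP G) (H : Subgroup G)
    [H.FiniteIndex] : FP H := by
  classical
  obtain ⟨n, f, hsurj, T, hker⟩ := hG
  set Ht : Subgroup (FreeGroup (Fin n)) := H.comap f with hHt
  have hfi : Ht.FiniteIndex := by
    constructor
    rw [hHt, Subgroup.index_comap_of_surjective H hsurj]
    exact Subgroup.FiniteIndex.index_ne_zero
  have hfg : Group.FG Ht := Subgroup.fg_of_index_ne_zero Ht
  obtain ⟨k, ⟨e⟩⟩ := freeGroup_fin_equiv Ht hfg
  -- the restriction of f to Ht, as a hom onto H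
  have hmaps : ∀ x : Ht, f x ∈ H := fun x => x.2
  set f' : Ht →* H := (f.comp Ht.subtype).codRestrict H (fun x => x.2) with hf'
  have hf'surj : Function.Surjective f' := by
    rintro ⟨y, hy⟩
    obtain ⟨x, rfl⟩ := hsurj y
    exact ⟨⟨x, hy⟩, rfl⟩
  have hkerf' : f'.ker = (Subgroup.normalClosure (T : Set (FreeGroup (Fin n)))).subgroupOf Ht := by
    ext x
    rw [MonoidHom.mem_ker, Subgroup.mem_subgroupOf, ← hker]
    constructor
    · intro hx
      have : ((f' x : H) : G) = 1 := by rw [hx]; rfl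
      exact this
    · intro hx
      exact Subtype.ext hx
  have hle : Subgroup.normalClosure (T : Set (FreeGroup (Fin n))) ≤ Ht := by
    rw [← hker]
    intro x hx
    rw [hHt, Subgroup.mem_comap, MonoidHom.mem_ker.mp hx]
    exact one_mem H
  obtain ⟨S, hSeq, hSfin⟩ := subgroupOf_normalClosure_finiteIndex Ht
    (T : Set (FreeGroup (Fin n))) hle
  have hSfin' : S.Finite := hSfin (T.finite_toSet)
  -- compose with the isomorphism e.symm : FreeGroup (Fin k) ≃* Ht
  refine ⟨k, f'.comp e.symm.toMonoidHom, hf'surj.comp e.symm.surjective, ?_⟩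
  have hkercomp : (f'.comp e.symm.toMonoidHom).ker = Subgroup.comap e.symm.toMonoidHom f'.ker := by
    rfl
  have : (f'.comp e.symm.toMonoidHom).ker =
      Subgroup.normalClosure ((e.symm : FreeGroup (Fin k) ≃* Ht) ⁻¹' S) := by
    rw [hkercomp, hkerf', hSeq]
    exact (Subgroup.comap_normalClosure S e.symm).symm
  have hfin2 : ((e.symm : FreeGroup (Fin k) ≃* Ht) ⁻¹' S).Finite :=
    Set.Finite.preimage (e.symm.injective.injOn) hSfin'
  refine ⟨hfin2.toFinset, ?_⟩
  rw [this, Set.Finite.coe_toFinset]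

open scoped commutatorElement

theorem fp_prod_int {Γ : Type*} [Group Γ] (hΓ : FP Γ) : FP (Γ × Multiplicative ℤ) := by
  classical
  obtain ⟨n, f, hsurj, T, hker⟩ := hΓ
  set emb : FreeGroup (Fin n) →* FreeGroup (Fin (n + 1)) :=
    FreeGroup.map Fin.castSucc with hemb
  set gens : Fin (n + 1) → Γ × Multiplicative ℤ :=
    Fin.lastCases (1, Multiplicative.ofAdd 1) (fun i => (f (FreeGroup.of i), 1)) with hgens
  set π : FreeGroup (Fin (n + 1)) →* Γ × Multiplicative ℤ := FreeGroup.lift gens with hπ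
  have hπemb : ∀ w : FreeGroup (Fin n), π (emb w) = (f w, 1) := by
    intro w
    have : π.comp emb = ((MonoidHom.inl Γ (Multiplicative ℤ)).comp f) := by
      apply FreeGroup.ext_hom
      intro a
      simp only [MonoidHom.comp_apply, hemb, FreeGroup.map.of, hπ, FreeGroup.lift_apply_of, hgens]
      rw [Fin.lastCases_castSucc]
      rfl
    exact DFunLike.congr_fun this w
  have hπlast : π (FreeGroup.of (Fin.last n)) = (1, Multiplicative.ofAdd 1) := by
    simp only [hπ, FreeGroup.lift_apply_of, hgens, Fin.lastCases_last]
  have hπsurj : Function.Surjective π := by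
    rintro ⟨γ, z⟩
    obtain ⟨w, hw⟩ := hsurj γ
    refine ⟨emb w * (FreeGroup.of (Fin.last n)) ^ (Multiplicative.toAdd z), ?_⟩
    rw [map_mul, map_zpow, hπemb, hπlast, hw]
    ext
    · simp
    · simp [← ofAdd_zsmul]
  set comms : Finset (FreeGroup (Fin (n + 1))) :=
    Finset.image (fun i : Fin n => FreeGroup.of (Fin.castSucc i) * FreeGroup.of (Fin.last n) *
      (FreeGroup.of (Fin.castSucc i))⁻¹ * (FreeGroup.of (Fin.last n))⁻¹) Finset.univ with hcomms
  set rels : Finset (FreeGroup (Fin (n + 1))) := T.image emb ∪ comms with hrels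
  set R : Subgroup (FreeGroup (Fin (n + 1))) :=
    Subgroup.normalClosure (rels : Set (FreeGroup (Fin (n + 1)))) with hR
  have hRker : R ≤ π.ker := by
    apply Subgroup.normalClosure_le_normal
    intro x hx
    rw [SetLike.mem_coe, MonoidHom.mem_ker]
    simp only [hrels, Finset.coe_union, Set.mem_union, Finset.coe_image, Set.mem_image,
      Finset.mem_coe] at hx
    rcases hx with ⟨r, hr, rfl⟩ | hx
    · rw [hπemb]
      have : f r = 1 := by
        have : r ∈ f.ker := by rw [hker]; exact Subgroup.subset_normalClosure hr
        exact this
      rw [this]; rfl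
    · rw [hcomms, Finset.mem_image] at hx
      obtain ⟨i, -, hxe⟩ := hx
      subst hxe
      have h1 : π (FreeGroup.of (Fin.castSucc i)) = (f (FreeGroup.of i), 1) := by
        simp only [hπ, FreeGroup.lift_apply_of, hgens, Fin.lastCases_castSucc]
      simp only [map_mul, map_inv, h1, hπlast]
      ext <;> simp
  -- now the reverse inclusion
  refine ⟨n + 1, π, hπsurj, rels, le_antisymm ?_ hRker⟩
  intro x hx
  set mk : FreeGroup (Fin (n + 1)) →* FreeGroup (Fin (n + 1)) ⧸ R := QuotientGroup.mk' R
  have hc_comm : ∀ i : Fin (n + 1),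
      Commute (mk (FreeGroup.of (Fin.last n))) (mk (FreeGroup.of i)) := by
    intro i
    induction i using Fin.lastCases with
    | last => exact Commute.refl _
    | cast j =>
      have hmem : FreeGroup.of (Fin.castSucc j) * FreeGroup.of (Fin.last n) *
          (FreeGroup.of (Fin.castSucc j))⁻¹ * (FreeGroup.of (Fin.last n))⁻¹ ∈ R := by
        apply Subgroup.subset_normalClosure
        rw [hrels]
        exact Finset.mem_coe.mpr (Finset.mem_union_right _
          (Finset.mem_image_of_mem _ (Finset.mem_univ j)))
      have h1 : mk (FreeGroup.of (Fin.castSucc j) * FreeGroup.of (Fin.last n) *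
          (FreeGroup.of (Fin.castSucc j))⁻¹ * (FreeGroup.of (Fin.last n))⁻¹) = 1 :=
        (QuotientGroup.eq_one_iff _).mpr hmem
      have h2 : ⁅mk (FreeGroup.of (Fin.castSucc j)), mk (FreeGroup.of (Fin.last n))⁆ = 1 := by
        rw [commutatorElement_def]
        simpa [map_mul, map_inv] using h1
      exact (commutatorElement_eq_one_iff_commute.mp h2).symm
  have hc_central : ∀ y : FreeGroup (Fin (n + 1)),
      Commute (mk (FreeGroup.of (Fin.last n))) (mk y) := by
    intro y
    induction y using FreeGroup.induction_on with
    | C1 => simp [Commute.one_right]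
    | of i => exact hc_comm i
    | inv_of i h => simpa using h.inv_right
    | mul a b ha hb => simpa [map_mul] using ha.mul_right hb
  have hdec : ∀ y : FreeGroup (Fin (n + 1)), ∃ (u : FreeGroup (Fin n)) (m : ℤ),
      mk y = mk (emb u) * (mk (FreeGroup.of (Fin.last n))) ^ m := by
    intro y
    induction y using FreeGroup.induction_on with
    | C1 => exact ⟨1, 0, by simp⟩
    | of i =>
      induction i using Fin.lastCases with
      | last => exact ⟨1, 1, by simp⟩
      | cast j => exact ⟨FreeGroup.of j, 0, by simp [hemb, FreeGroup.map.of]⟩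
    | inv_of i _ =>
      induction i using Fin.lastCases with
      | last => exact ⟨1, -1, by simp⟩
      | cast j => exact ⟨(FreeGroup.of j)⁻¹, 0, by simp [hemb, FreeGroup.map.of]⟩
    | mul a b ha hb =>
      obtain ⟨u, m, hu⟩ := ha
      obtain ⟨v, m', hv⟩ := hb
      refine ⟨u * v, m + m', ?_⟩
      have hcomm := (hc_central (emb v)).zpow_left m
      rw [map_mul, hu, hv, map_mul, map_mul]
      rw [mul_assoc, ← mul_assoc (mk (FreeGroup.of (Fin.last n)) ^ m), hcomm.eq]
      group
  obtain ⟨u, m, hu⟩ := hdec x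
  -- push through π̄
  have hπbar : ∀ y : FreeGroup (Fin (n + 1)), y ∈ R → π y = 1 := fun y hy =>
    MonoidHom.mem_ker.mp (hRker hy)
  set πbar : (FreeGroup (Fin (n + 1)) ⧸ R) →* Γ × Multiplicative ℤ :=
    QuotientGroup.lift R π hπbar with hπbarilem
  have hπx : π x = 1 := MonoidHom.mem_ker.mp hx
  have key : (1 : Γ × Multiplicative ℤ) = (f u, Multiplicative.ofAdd m) := by
    have : πbar (mk x) = πbar (mk (emb u) * (mk (FreeGroup.of (Fin.last n))) ^ m) := by rw [hu]
    have hπbarmk : ∀ y, πbar (mk y) = π y := fun y => rfl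
    rw [hπbarmk, hπx] at this
    rw [this, map_mul, map_zpow, hπbarmk, hπbarmk, hπemb, hπlast]
    ext
    · simp
    · simp [← ofAdd_zsmul]
  have hm : m = 0 := by
    have h5 : Multiplicative.ofAdd m = (1 : Multiplicative ℤ) :=
      (congrArg Prod.snd key).symm
    simpa using h5
  have hfu : f u = 1 := by
    have := congrArg Prod.fst key
    simpa using (this).symm
  have huker : u ∈ Subgroup.normalClosure (T : Set (FreeGroup (Fin n))) := by
    rw [← hker]; exact hfu
  have hembT : emb u ∈ R := by
    have hle : Subgroup.normalClosure (T : Set (FreeGroup (Fin n))) ≤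
        Subgroup.comap emb R := by
      apply Subgroup.normalClosure_le_normal
      intro r hr
      rw [SetLike.mem_coe, Subgroup.mem_comap]
      apply Subgroup.subset_normalClosure
      simp only [hrels, Finset.coe_union, Set.mem_union]
      left
      exact Finset.mem_coe.mpr (Finset.mem_image_of_mem _ hr)
    exact hle huker
  have : mk x = 1 := by
    have h6 : mk (emb u) = 1 := (QuotientGroup.eq_one_iff _).mpr hembT
    rw [hu, hm, h6]
    simp
  exact (QuotientGroup.eq_one_iff _).mp this

theorem fp_of_equiv {G K : Type*} [Group G] [Group K] (e : G ≃* K) (h : FP G) : FP K := by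
  obtain ⟨n, f, hsurj, T, hker⟩ := h
  refine ⟨n, e.toMonoidHom.comp f, e.surjective.comp hsurj, T, ?_⟩
  rw [← hker]
  ext x
  simp [MonoidHom.mem_ker]

theorem fg_of_fp {G : Type*} [Group G] (h : FP G) : Group.FG G := by
  obtain ⟨n, f, hsurj, -⟩ := h
  exact Group.fg_of_surjective hsurj

theorem normalClosure_union {G : Type*} [Group G] (s t : Set G) :
    Subgroup.normalClosure (s ∪ t) = Subgroup.normalClosure s ⊔ Subgroup.normalClosure t := by
  apply le_antisymm
  · apply Subgroup.normalClosure_le_normal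
    rintro x (hx | hx)
    · exact SetLike.mem_coe.mpr (Subgroup.mem_sup_left (Subgroup.subset_normalClosure hx))
    · exact SetLike.mem_coe.mpr (Subgroup.mem_sup_right (Subgroup.subset_normalClosure hx))
  · apply sup_le
    · exact Subgroup.normalClosure_mono Set.subset_union_left
    · exact Subgroup.normalClosure_mono Set.subset_union_right

theorem comap_normalClosure_surj {G K : Type*} [Group G] [Group K] (f : G →* K)
    (hsurj : Function.Surjective f) (S' : Set G) :
    Subgroup.comap f (Subgroup.normalClosure (f '' S')) = Subgroup.normalClosure S' ⊔ f.ker := by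
  rw [← Subgroup.map_normalClosure S' f hsurj, Subgroup.comap_map_eq]

/-- Let `Γ` be a finitely presented group and `N ⊴ Γ` a normal subgroup that
is not finitely presentable (equivalently, not isomorphic to any finitely
presentable group).  Then `A = N × {0}` is not a direct factor of any
finite-index subgroup of `G = Γ × ℤ`: there is no finite-index subgroup `H`
of `G` containing `A` together with a complementary subgroup `C ≤ H` (with
`A ∩ C = {1}`, `A·C = H`, and `A` and `C` commuting elementwise, i.e.
`H = A × C` internally). -/
theorem statement15 {Γ : Type*} [Group Γ] (hΓ : FinitelyPresentable Γ)
    (N : Subgroup Γ) [N.Normal] (hN : ¬ FinitelyPresentable N) :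
    ¬ ∃ (H : Subgroup (Γ × Multiplicative ℤ)) (_ : H.FiniteIndex)
        (C : Subgroup (Γ × Multiplicative ℤ)),
      (N.prod (⊥ : Subgroup (Multiplicative ℤ))) ≤ H ∧ C ≤ H ∧
      (N.prod (⊥ : Subgroup (Multiplicative ℤ))) ⊓ C = ⊥ ∧
      (N.prod (⊥ : Subgroup (Multiplicative ℤ))) ⊔ C = H ∧
      (∀ a ∈ N.prod (⊥ : Subgroup (Multiplicative ℤ)), ∀ c ∈ C, a * c = c * a) := by
  classical
  rintro ⟨H, hFI, C, hAH, hCH, hint, hsup, hcomm⟩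
  haveI := hFI
  set A : Subgroup (Γ × Multiplicative ℤ) := N.prod ⊥ with hA
  have hFPG : FP (Γ × Multiplicative ℤ) := fp_prod_int ((fp_iff Γ).mp hΓ)
  have hFPH : FP H := fp_of_finiteIndex hFPG H
  set A' : Subgroup H := A.subgroupOf H with hA'
  set C' : Subgroup H := C.subgroupOf H with hC'
  have hdecH : ∀ h : H, ∃ a ∈ A, ∃ c ∈ C, a * c = (h : Γ × Multiplicative ℤ) := by
    intro h
    have hmem : (h : Γ × Multiplicative ℤ) ∈ A ⊔ C := by rw [hsup]; exact h.2
    haveI : A.Normal := by rw [hA]; infer_instance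
    rw [← SetLike.mem_coe, Subgroup.normal_mul] at hmem
    obtain ⟨a, ha, c, hc, hac⟩ := hmem
    exact ⟨a, ha, c, hc, hac⟩
  have hA'n : A'.Normal := by
    constructor
    intro x hx g
    rw [Subgroup.mem_subgroupOf] at hx ⊢
    obtain ⟨a, ha, c, hc, hac⟩ := hdecH g
    have hcx : c * (x : Γ × Multiplicative ℤ) * c⁻¹ = x := by
      rw [← hcomm _ hx _ hc]; group
    have : ((g * x * g⁻¹ : H) : Γ × Multiplicative ℤ) =
        a * (c * (x : Γ × Multiplicative ℤ) * c⁻¹) * a⁻¹ := by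
      push_cast
      rw [← hac]; group
    rw [this, hcx]
    exact A.mul_mem (A.mul_mem ha hx) (A.inv_mem ha)
  have hC'n : C'.Normal := by
    constructor
    intro x hx g
    rw [Subgroup.mem_subgroupOf] at hx ⊢
    obtain ⟨a, ha, c, hc, hac⟩ := hdecH g
    have hcx : c * (x : Γ × Multiplicative ℤ) * c⁻¹ ∈ C :=
      C.mul_mem (C.mul_mem hc hx) (C.inv_mem hc)
    have hax : a * (c * (x : Γ × Multiplicative ℤ) * c⁻¹) * a⁻¹ =
        c * (x : Γ × Multiplicative ℤ) * c⁻¹ := by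
      rw [hcomm _ ha _ hcx]; group
    have : ((g * x * g⁻¹ : H) : Γ × Multiplicative ℤ) =
        a * (c * (x : Γ × Multiplicative ℤ) * c⁻¹) * a⁻¹ := by
      push_cast
      rw [← hac]; group
    rw [this, hax]
    exact hcx
  haveI := hA'n
  haveI := hC'n
  -- the two quotient isomorphisms
  have hdecH' : ∀ h : H, ∃ (aH : H) (cH : H), aH ∈ A' ∧ cH ∈ C' ∧ h = aH * cH := by
    intro h
    obtain ⟨a, ha, c, hc, hac⟩ := hdecH h
    refine ⟨⟨a, hAH ha⟩, ⟨c, hCH hc⟩, ?_, ?_, ?_⟩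
    · rwa [Subgroup.mem_subgroupOf]
    · rwa [Subgroup.mem_subgroupOf]
    · apply Subtype.ext
      push_cast
      exact hac.symm
  have hintH : ∀ x : H, x ∈ A' → x ∈ C' → x = 1 := by
    intro x hx1 hx2
    rw [Subgroup.mem_subgroupOf] at hx1 hx2
    have : (x : Γ × Multiplicative ℤ) ∈ A ⊓ C := ⟨hx1, hx2⟩
    rw [hint] at this
    exact Subtype.ext this
  -- C' ≃* H ⧸ A'
  set φC : C' →* H ⧸ A' := (QuotientGroup.mk' A').comp C'.subtype with hφC
  have hφCinj : Function.Injective φC := by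
    rw [injective_iff_map_eq_one]
    intro x hx
    have : (x : H) ∈ A' := (QuotientGroup.eq_one_iff _).mp hx
    exact Subtype.ext (hintH _ this x.2)
  have hφCsurj : Function.Surjective φC := by
    intro q
    obtain ⟨h, rfl⟩ := QuotientGroup.mk'_surjective A' q
    obtain ⟨aH, cH, haH, hcH, hdec⟩ := hdecH' h
    refine ⟨⟨cH, hcH⟩, ?_⟩
    have h0 : φC ⟨cH, hcH⟩ = QuotientGroup.mk' A' cH := rfl
    have haH1 : QuotientGroup.mk' A' aH = 1 := (QuotientGroup.eq_one_iff _).mpr haH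
    rw [h0, hdec, map_mul, haH1, one_mul]
  -- A' ≃* H ⧸ C'
  set φA : A' →* H ⧸ C' := (QuotientGroup.mk' C').comp A'.subtype with hφA
  have hφAinj : Function.Injective φA := by
    rw [injective_iff_map_eq_one]
    intro x hx
    have : (x : H) ∈ C' := (QuotientGroup.eq_one_iff _).mp hx
    exact Subtype.ext (hintH _ x.2 this)
  have hφAsurj : Function.Surjective φA := by
    intro q
    obtain ⟨h, rfl⟩ := QuotientGroup.mk'_surjective C' q
    obtain ⟨aH, cH, haH, hcH, hdec⟩ := hdecH' h
    refine ⟨⟨aH, haH⟩, ?_⟩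
    have h0 : φA ⟨aH, haH⟩ = QuotientGroup.mk' C' aH := rfl
    have hcH1 : QuotientGroup.mk' C' cH = 1 := (QuotientGroup.eq_one_iff _).mpr hcH
    rw [h0, hdec, map_mul, hcH1, mul_one]
  -- C' is finitely generated
  have hHfg : Group.FG H := fg_of_fp hFPH
  have hQfg : Group.FG (H ⧸ A') := Group.fg_of_surjective (QuotientGroup.mk'_surjective A')
  have hC'fg : Group.FG C' := by
    have e1 : (H ⧸ A') ≃* C' := (MulEquiv.ofBijective φC ⟨hφCinj, hφCsurj⟩).symm
    exact @Group.fg_of_surjective _ _ _ _ hQfg e1.toMonoidHom e1.surjective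
  obtain ⟨S, hScl, hSfin⟩ := (Subgroup.fg_iff C').mp ((Group.fg_iff_subgroup_fg C').mp hC'fg)
  have hSnc : Subgroup.normalClosure S = C' := by
    apply le_antisymm
    · apply Subgroup.normalClosure_le_normal
      rw [← hScl]
      exact Subgroup.subset_closure
    · rw [← hScl]
      exact Subgroup.closure_le_normalClosure
  -- H ⧸ C' is finitely presentable
  obtain ⟨k, φ, hφsurj, T, hφker⟩ := hFPH
  set L : Set (FreeGroup (Fin k)) := (fun s => Classical.choose (hφsurj s)) '' S with hL
  have hLim : φ '' L = S := by
    rw [hL, Set.image_image]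
    ext x
    constructor
    · rintro ⟨s, hs, rfl⟩
      show φ (Classical.choose (hφsurj s)) ∈ S
      rw [Classical.choose_spec (hφsurj s)]
      exact hs
    · intro hx
      exact ⟨x, hx, Classical.choose_spec (hφsurj x)⟩
  set ψ : FreeGroup (Fin k) →* H ⧸ C' := (QuotientGroup.mk' C').comp φ with hψ
  have hψsurj : Function.Surjective ψ := (QuotientGroup.mk'_surjective C').comp hφsurj
  have hψker : ψ.ker = Subgroup.normalClosure (L ∪ (T : Set (FreeGroup (Fin k)))) := by
    have h1 : ψ.ker = Subgroup.comap φ C' := by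
      rw [hψ]
      ext x
      simp [MonoidHom.mem_ker]
    rw [h1, ← hSnc, ← hLim, comap_normalClosure_surj φ hφsurj L, hφker,
      _root_.normalClosure_union]
  have hFPQ : FP (H ⧸ C') := by
    have hLfin : L.Finite := by rw [hL]; exact hSfin.image _
    refine ⟨k, ψ, hψsurj, (hLfin.union T.finite_toSet).toFinset, ?_⟩
    rw [hψker]
    congr 1
    simp
  -- transport to N
  have eNA : (A : Set (Γ × Multiplicative ℤ)) = A ∧ True := ⟨rfl, trivial⟩
  have e4 : (N.prod (⊥ : Subgroup (Multiplicative ℤ))) ≃* N :=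
    (Subgroup.prodEquiv N ⊥).trans MulEquiv.prodUnique
  have e5 : A' ≃* A := Subgroup.subgroupOfEquivOfLe hAH
  have e6 : (H ⧸ C') ≃* N :=
    ((MulEquiv.ofBijective φA ⟨hφAinj, hφAsurj⟩).symm.trans e5).trans e4
  exact hN ((fp_iff _).mpr (fp_of_equiv e6 hFPQ))
end
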